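/- arXiv:1911.11617 — 9 statements merged into one kernel-verified Lean document; each statement's English description precedes it below -/
import Mathlib

section
/- For a T0 topological space X (equipped with its specialization order, where x ≤ y iff x lies in the closure of {y}), the following conditions are equivalent: (1) X is a d-space; (2) for every directed subset D of X there exists x ∈ X with closure(D) = closure({x}); (3) for every directed subset D of X and every open set U, if ⋂_{d∈D} ↑d ⊆ U then d ∈ U for some d ∈ D; (4) for every directed subset D and every closed set A with D ⊆ A, one has A ∩ ⋂_{d∈D} ↑d ≠ ∅; (5) for every directed subset D, closure(D) ∩ ⋂_{d∈D} ↑d ≠ ∅. -/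
open Set

universe u

variable {α : Type u}

/-- The specialization order used in the paper: `x ≤ y` iff `x ∈ closure {y}`. -/
def specLE [TopologicalSpace α] (x y : α) : Prop := x ∈ closure ({y} : Set α)

/-- `↑x = {y | x ≤ y}` in the specialization order. -/
def upOf [TopologicalSpace α] (x : α) : Set α := {y | specLE x y}

/-- `↑F = {y | ∃ a ∈ F, a ≤ y}` in the specialization order. -/
def upSetOf [TopologicalSpace α] (F : Set α) : Set α := {y | ∃ a ∈ F, specLE a y}

/-- `↓B = {x | ∃ b ∈ B, x ≤ b}` in the specialization order. -/
def downOf [TopologicalSpace α] (B : Set α) : Set α := {x | ∃ b ∈ B, specLE x b}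

/-- A set directed with respect to the specialization order: nonempty, and any two
elements have an upper bound in it. -/
def SDirected [TopologicalSpace α] (D : Set α) : Prop :=
  D.Nonempty ∧ ∀ a ∈ D, ∀ b ∈ D, ∃ c ∈ D, specLE a c ∧ specLE b c

/-- `s` is a supremum (least upper bound) of `D` in the specialization order. -/
def SIsSup [TopologicalSpace α] (D : Set α) (s : α) : Prop :=
  (∀ d ∈ D, specLE d s) ∧ ∀ t : α, (∀ d ∈ D, specLE d t) → specLE s t

/-- Upper set (= saturated set) in the specialization order. -/
def SUpper [TopologicalSpace α] (A : Set α) : Prop :=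
  ∀ ⦃x y : α⦄, x ∈ A → specLE x y → y ∈ A

/-- Scott open set with respect to the specialization order. -/
def SScottOpen [TopologicalSpace α] (U : Set α) : Prop :=
  SUpper U ∧ ∀ D : Set α, SDirected D → ∀ s : α, SIsSup D s → s ∈ U → (D ∩ U).Nonempty

/-- A d-space: a dcpo under the specialization order, all open sets Scott open. -/
def IsDSpace (α : Type u) [TopologicalSpace α] : Prop :=
  (∀ D : Set α, SDirected D → ∃ s : α, SIsSup D s) ∧
    ∀ U : Set α, IsOpen U → SScottOpen U

/-- Member of `K(X)`: nonempty, compact and saturated. -/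
def IsKSet [TopologicalSpace α] (K : Set α) : Prop :=
  K.Nonempty ∧ IsCompact K ∧ SUpper K

/-- A filtered family of sets: nonempty, and any two members contain a common member. -/
def FilteredFam (𝒦 : Set (Set α)) : Prop :=
  𝒦.Nonempty ∧ ∀ K1 ∈ 𝒦, ∀ K2 ∈ 𝒦, ∃ K3 ∈ 𝒦, K3 ⊆ K1 ∩ K2

/-- Well-filtered space: for every filtered family of nonempty compact saturated sets whose
intersection is contained in an open `U`, some member is contained in `U`. -/
def IsWellFiltered (α : Type u) [TopologicalSpace α] : Prop :=
  ∀ 𝒦 : Set (Set α), (∀ K ∈ 𝒦, IsKSet K) → FilteredFam 𝒦 →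
    ∀ U : Set α, IsOpen U → ⋂₀ 𝒦 ⊆ U → ∃ K ∈ 𝒦, K ⊆ U

/-- Rudin set: a nonempty set `A` such that for some filtered family `𝒦 ⊆ K(X)`,
`closure A` is a minimal closed set meeting every member of `𝒦`. -/
def IsRudin [TopologicalSpace α] (A : Set α) : Prop :=
  A.Nonempty ∧ ∃ 𝒦 : Set (Set α), (∀ K ∈ 𝒦, IsKSet K) ∧ FilteredFam 𝒦 ∧
    (∀ K ∈ 𝒦, (closure A ∩ K).Nonempty) ∧
    ∀ B : Set α, IsClosed B → B ⊆ closure A → (∀ K ∈ 𝒦, (B ∩ K).Nonempty) → B = closure A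

/-- Well-filtered determined set: every continuous map into a well-filtered T0 space sends it
to a set whose closure is the closure of a unique point. -/
def IsWFD [TopologicalSpace α] (A : Set α) : Prop :=
  ∀ (Y : Type u) [TopologicalSpace Y] [T0Space Y], IsWellFiltered Y →
    ∀ f : α → Y, Continuous f → ∃! y : Y, closure (f '' A) = closure ({y} : Set Y)

/-- Irreducible set. -/
def IsIrred [TopologicalSpace α] (A : Set α) : Prop :=
  A.Nonempty ∧ ∀ F1 F2 : Set α, IsClosed F1 → IsClosed F2 → A ⊆ F1 ∪ F2 → A ⊆ F1 ∨ A ⊆ F2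

/-- Sober space: every irreducible closed set is the closure of a unique point. -/
def IsSober (α : Type u) [TopologicalSpace α] : Prop :=
  ∀ A : Set α, IsClosed A → IsIrred A → ∃! x : α, A = closure ({x} : Set α)

/-- `A` has a maximal element with respect to the specialization order. -/
def HasMaxElem [TopologicalSpace α] (A : Set α) : Prop :=
  ∃ m ∈ A, ∀ a ∈ A, specLE m a → a = m

/-- Strong d-space. -/
def IsStrongDSpace (α : Type u) [TopologicalSpace α] : Prop :=
  ∀ D : Set α, SDirected D → ∀ x : α, ∀ U : Set α, IsOpen U →
    (⋂ d ∈ D, upOf d) ∩ upOf x ⊆ U → ∃ d ∈ D, upOf d ∩ upOf x ⊆ U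

/-- characterizations of d-spaces. -/
theorem stmt_0 (α : Type u) [TopologicalSpace α] [T0Space α] :
    List.TFAE
      [ IsDSpace α,
        ∀ D : Set α, SDirected D → ∃ x : α, closure D = closure ({x} : Set α),
        ∀ D : Set α, SDirected D → ∀ U : Set α, IsOpen U →
          (⋂ d ∈ D, upOf d) ⊆ U → ∃ d ∈ D, d ∈ U,
        ∀ D : Set α, SDirected D → ∀ A : Set α, IsClosed A → D ⊆ A →
          (A ∩ ⋂ d ∈ D, upOf d).Nonempty,
        ∀ D : Set α, SDirected D → (closure D ∩ ⋂ d ∈ D, upOf d).Nonempty ] := by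
  tfae_have 1 → 2 := by
    rintro ⟨hdcpo, hscott⟩ D hD
    obtain ⟨s, hs⟩ := hdcpo D hD
    refine ⟨s, ?_⟩
    have h1 : closure D ⊆ closure {s} :=
      closure_minimal (fun d hd => hs.1 d hd) isClosed_closure
    have h2 : s ∈ closure D := by
      by_contra hcl
      have hU := hscott _ (isOpen_compl_iff.mpr (isClosed_closure (s := D)))
      obtain ⟨d, hdD, hdU⟩ := hU.2 D hD s hs hcl
      exact hdU (subset_closure hdD)
    exact Subset.antisymm h1
      (closure_minimal (singleton_subset_iff.mpr h2) isClosed_closure)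
  tfae_have 2 → 3 := by
    intro h2 D hD U hU hsub
    obtain ⟨x, hx⟩ := h2 D hD
    have hxmem : x ∈ ⋂ d ∈ D, upOf d := by
      simp only [mem_iInter]
      intro d hd
      show d ∈ closure ({x} : Set α)
      rw [← hx]; exact subset_closure hd
    have hxc : x ∈ closure D := by
      rw [hx]; exact subset_closure rfl
    obtain ⟨d, hdU, hdD⟩ := mem_closure_iff.mp hxc U hU (hsub hxmem)
    exact ⟨d, hdD, hdU⟩
  tfae_have 3 → 4 := by
    intro h3 D hD A hA hDA
    by_contra hne
    rw [not_nonempty_iff_eq_empty] at hne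
    have hsub : (⋂ d ∈ D, upOf d) ⊆ Aᶜ := by
      intro x hx hxA
      have : x ∈ A ∩ ⋂ d ∈ D, upOf d := ⟨hxA, hx⟩
      simp [hne] at this
    obtain ⟨d, hdD, hdc⟩ := h3 D hD Aᶜ hA.isOpen_compl hsub
    exact hdc (hDA hdD)
  tfae_have 4 → 5 := by
    intro h4 D hD
    exact h4 D hD _ isClosed_closure subset_closure
  tfae_have 5 → 1 := by
    intro h5
    have key : ∀ D : Set α, SDirected D → ∃ s, SIsSup D s ∧ s ∈ closure D := by
      intro D hD
      obtain ⟨x, hxc, hxi⟩ := h5 D hD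
      simp only [mem_iInter] at hxi
      refine ⟨x, ⟨fun d hd => hxi d hd, ?_⟩, hxc⟩
      intro t ht
      exact closure_minimal (fun d hd => ht d hd) isClosed_closure hxc
    constructor
    · exact fun D hD => (key D hD).elim fun s hs => ⟨s, hs.1⟩
    · intro U hU
      have hupper : SUpper U := fun x y hx hxy =>
        (specializes_iff_mem_closure.mpr hxy).mem_open hU hx
      refine ⟨hupper, ?_⟩
      intro D hD s hs hsU
      obtain ⟨x, hxsup, hxc⟩ := key D hD
      have h1 : x ⤳ s := specializes_iff_mem_closure.mpr (hs.2 x hxsup.1)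
      have h2 : s ⤳ x := specializes_iff_mem_closure.mpr (hxsup.2 s hs.1)
      have hxs : x = s := (h1.antisymm h2).eq
      obtain ⟨d, hdU, hdD⟩ := mem_closure_iff.mp hxc U hU (hxs ▸ hsU)
      exact ⟨d, hdD, hdU⟩
  tfae_finish
end

section
/- If X is a d-space and A is a nonempty closed subset of X, then A has a maximal element with respect to the specialization order of X. -/
open Set

universe u

variable {α : Type u}

/-- in a d-space every nonempty closed set has a maximal element. -/
theorem stmt_1 (α : Type u) [TopologicalSpace α] [T0Space α] (hd : IsDSpace α)
    (A : Set α) (hA : IsClosed A) (hne : A.Nonempty) : HasMaxElem A := by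
  letI : Preorder α := {
    le := specLE
    le_refl := fun x => subset_closure rfl
    le_trans := fun x y z hxy hyz => by
      have : closure ({y} : Set α) ⊆ closure ({z} : Set α) :=
        closure_minimal (Set.singleton_subset_iff.2 hyz) isClosed_closure
      exact this hxy }
  obtain ⟨x, hx⟩ := hne
  obtain ⟨m, hxm, hms, hmax⟩ := zorn_le_nonempty₀ A (fun c hcA hc y hy => by
    have hdir : SDirected c := by
      refine ⟨⟨y, hy⟩, fun a ha b hb => ?_⟩
      rcases hc.total ha hb with h | h
      · exact ⟨b, hb, h, le_refl b⟩
      · exact ⟨a, ha, le_refl a, h⟩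
    obtain ⟨s, hs⟩ := hd.1 c hdir
    have hsA : s ∈ A := by
      by_contra hsN
      have := (hd.2 Aᶜ hA.isOpen_compl).2 c hdir s hs hsN
      obtain ⟨z, hzc, hzn⟩ := this
      exact hzn (hcA hzc)
    exact ⟨s, hsA, fun z hz => hs.1 z hz⟩) x hx
  refine ⟨m, hms, fun a ha hle => ?_⟩
  have : a ≤ m := hmax ha hle
  have h1 : a ∈ closure ({m} : Set α) := this
  have h2 : m ∈ closure ({a} : Set α) := hle
  exact ((specializes_iff_mem_closure.2 h1).antisymm (specializes_iff_mem_closure.2 h2)).eq.symm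
end

section
/- Let X be a T0 space, Y a well-filtered T0 space, and f : X → Y a continuous map. If A ⊆ X is a Rudin set (i.e., A has the Rudin property), then there exists a unique point y ∈ Y such that the closure of f(A) equals the closure of {y}. -/
/-!
Push the filtered family `𝒦` witnessing the Rudin property of `A` forward along `f`: the sets
`↑f(cl A ∩ K)` form a filtered family of compact saturated sets in `Y`, each meeting the closed set
`C = cl f(A)`. Well-filteredness yields a point `y ∈ C` lying in all of them. Then `f⁻¹(cl {y}) ∩ cl A`
is a closed subset of `cl A` meeting every `K ∈ 𝒦`, so by minimality it is all of `cl A`; hence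
`f(A) ⊆ cl {y}` and `C = cl {y}`. Uniqueness is the T0 axiom.
-/

open Set

universe u

variable {α : Type u}

section Specialization

variable [TopologicalSpace α]

lemma specLE_iff_specializes {x y : α} : specLE x y ↔ y ⤳ x :=
  specializes_iff_mem_closure.symm

lemma IsOpen.mem_of_specLE {U : Set α} (hU : IsOpen U) {x y : α} (hx : x ∈ U)
    (h : specLE x y) : y ∈ U :=
  (specLE_iff_specializes.1 h).mem_open hU hx

lemma IsClosed.mem_of_specLE {B : Set α} (hB : IsClosed B) {x y : α} (hy : y ∈ B)
    (h : specLE x y) : x ∈ B :=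
  (specLE_iff_specializes.1 h).mem_closed hB hy

lemma subset_upSetOf (S : Set α) : S ⊆ upSetOf S :=
  fun s hs => ⟨s, hs, specLE_iff_specializes.2 (specializes_refl s)⟩

lemma upSetOf_mono {S T : Set α} (h : S ⊆ T) : upSetOf S ⊆ upSetOf T := by
  rintro y ⟨a, ha, hay⟩
  exact ⟨a, h ha, hay⟩

lemma sUpper_upSetOf (S : Set α) : SUpper (upSetOf S) := by
  rintro x y ⟨a, ha, hax⟩ hxy
  exact ⟨a, ha, specLE_iff_specializes.2
    ((specLE_iff_specializes.1 hxy).trans (specLE_iff_specializes.1 hax))⟩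

lemma isCompact_upSetOf {S : Set α} (hS : IsCompact S) : IsCompact (upSetOf S) := by
  refine isCompact_of_finite_subcover fun U hU hcov => ?_
  obtain ⟨t, ht⟩ := hS.elim_finite_subcover U hU ((subset_upSetOf S).trans hcov)
  refine ⟨t, ?_⟩
  rintro y ⟨a, ha, hay⟩
  obtain ⟨i, hi, hai⟩ := mem_iUnion₂.1 (ht ha)
  exact mem_iUnion₂.2 ⟨i, hi, (hU i).mem_of_specLE hai hay⟩

lemma IsCompact.isKSet_upSetOf {S : Set α} (hS : IsCompact S) (hne : S.Nonempty) :
    IsKSet (upSetOf S) :=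
  ⟨hne.mono (subset_upSetOf S), isCompact_upSetOf hS, sUpper_upSetOf S⟩

end Specialization

lemma FilteredFam.image {β : Type*} {𝒦 : Set (Set α)} (h𝒦 : FilteredFam 𝒦)
    {g : Set α → Set β} (hg : Monotone g) : FilteredFam (g '' 𝒦) := by
  refine ⟨h𝒦.1.image g, ?_⟩
  rintro _ ⟨K₁, hK₁, rfl⟩ _ ⟨K₂, hK₂, rfl⟩
  obtain ⟨K₃, hK₃, hsub⟩ := h𝒦.2 K₁ hK₁ K₂ hK₂
  exact ⟨g K₃, mem_image_of_mem g hK₃,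
    subset_inter (hg (hsub.trans inter_subset_left)) (hg (hsub.trans inter_subset_right))⟩

lemma IsWellFiltered.sInter_inter_nonempty [TopologicalSpace α] (hα : IsWellFiltered α)
    {𝒦 : Set (Set α)} (h𝒦K : ∀ K ∈ 𝒦, IsKSet K) (h𝒦F : FilteredFam 𝒦) {C : Set α}
    (hC : IsClosed C) (hmeet : ∀ K ∈ 𝒦, (C ∩ K).Nonempty) : (⋂₀ 𝒦 ∩ C).Nonempty := by
  by_contra hempty
  obtain ⟨K, hK, hKC⟩ := hα 𝒦 h𝒦K h𝒦F Cᶜ hC.isOpen_compl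
    fun x hx hxC => hempty ⟨x, hx, hxC⟩
  obtain ⟨x, hxC, hxK⟩ := hmeet K hK
  exact hKC hxK hxC

section Image

variable {β : Type*} [TopologicalSpace α] [TopologicalSpace β] {f : α → β}

lemma image_subset_of_inter_upSetOf_nonempty (hf : Continuous f) {A : Set α}
    {𝒦 : Set (Set α)}
    (hmin : ∀ B : Set α, IsClosed B → B ⊆ closure A → (∀ K ∈ 𝒦, (B ∩ K).Nonempty) →
      B = closure A)
    {B : Set β} (hB : IsClosed B)
    (hmeet : ∀ K ∈ 𝒦, (B ∩ upSetOf (f '' (closure A ∩ K))).Nonempty) : f '' A ⊆ B := by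
  have hpre : closure A ⊆ f ⁻¹' B := by
    refine inter_eq_right.1 <|
      hmin _ ((hB.preimage hf).inter isClosed_closure) inter_subset_right fun K hK => ?_
    obtain ⟨b, hbB, _, ⟨a, ⟨haA, haK⟩, rfl⟩, hab⟩ := hmeet K hK
    exact ⟨a, ⟨hB.mem_of_specLE hbB hab, haA⟩, haK⟩
  exact image_subset_iff.2 (subset_closure.trans hpre)

end Image

theorem stmt_2_general {α : Type u} {β : Type u} [TopologicalSpace α]
    [TopologicalSpace β] [T0Space β] (hβ : IsWellFiltered β)
    (f : α → β) (hf : Continuous f) (A : Set α) (hA : IsRudin A) :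
    ∃! y : β, closure (f '' A) = closure ({y} : Set β) := by
  obtain ⟨-, 𝒦, h𝒦K, h𝒦F, h𝒦meet, h𝒦min⟩ := hA
  set core : Set α → Set β := fun K => upSetOf (f '' (closure A ∩ K))
  have hcoreK : ∀ S ∈ core '' 𝒦, IsKSet S := by
    rintro _ ⟨K, hK, rfl⟩
    exact (((h𝒦K K hK).2.1.inter_left isClosed_closure).image hf).isKSet_upSetOf
      ((h𝒦meet K hK).image f)
  have hcoreF : FilteredFam (core '' 𝒦) :=
    h𝒦F.image fun K₁ K₂ h => upSetOf_mono (image_mono (inter_subset_inter_right _ h))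
  have hcoreC : ∀ S ∈ core '' 𝒦, (closure (f '' A) ∩ S).Nonempty := by
    rintro _ ⟨K, hK, rfl⟩
    obtain ⟨a, haA, haK⟩ := h𝒦meet K hK
    exact ⟨f a, image_closure_subset_closure_image hf (mem_image_of_mem f haA),
      subset_upSetOf _ (mem_image_of_mem f ⟨haA, haK⟩)⟩
  obtain ⟨y, hycore, hyC⟩ := hβ.sInter_inter_nonempty hcoreK hcoreF isClosed_closure hcoreC
  have hAy : f '' A ⊆ closure {y} :=
    image_subset_of_inter_upSetOf_nonempty hf h𝒦min isClosed_closure fun K hK =>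
      ⟨y, subset_closure (mem_singleton y), hycore _ (mem_image_of_mem core hK)⟩
  have hy : closure (f '' A) = closure ({y} : Set β) :=
    (closure_minimal hAy isClosed_closure).antisymm
      (closure_minimal (singleton_subset_iff.2 hyC) isClosed_closure)
  exact ⟨y, hy, fun z hz => (inseparable_iff_closure_eq.2 (hz.symm.trans hy)).eq⟩

/-- a continuous image of a Rudin set in a well-filtered space has
closure the closure of a unique point. -/
theorem stmt_2 {α : Type u} {β : Type u} [TopologicalSpace α] [T0Space α]
    [TopologicalSpace β] [T0Space β] (hβ : IsWellFiltered β)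
    (f : α → β) (hf : Continuous f) (A : Set α) (hA : IsRudin A) :
    ∃! y : β, closure (f '' A) = closure ({y} : Set β) :=
  stmt_2_general hβ f hf A hA
end

section
/- Let X be a T0 space and D a directed subset of X (with respect to the specialization order). Then the closure of D is a Rudin set: there exists a filtered family K ⊆ K(X) such that closure(D) meets every member of K and no proper closed subset of closure(D) meets every member of K. -/
open Set

universe u

variable {α : Type u}

lemma specLE_refl [TopologicalSpace α] (x : α) : specLE x x := subset_closure rfl

lemma specLE_trans [TopologicalSpace α] {x y z : α} (h1 : specLE x y) (h2 : specLE y z) :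
    specLE x z := by
  have : closure ({y} : Set α) ⊆ closure ({z} : Set α) :=
    closure_minimal (Set.singleton_subset_iff.2 h2) isClosed_closure
  exact this h1

lemma open_upper [TopologicalSpace α] {U : Set α} (hU : IsOpen U) : SUpper U := by
  intro x y hx hxy
  rcases mem_closure_iff.1 hxy U hU hx with ⟨z, _, rfl⟩
  assumption

lemma isKSet_upOf [TopologicalSpace α] (x : α) : IsKSet (upOf x) := by
  refine ⟨⟨x, specLE_refl x⟩, ?_, fun a b ha hab => specLE_trans ha hab⟩
  refine isCompact_of_finite_subcover fun {ι} f hf hcov => ?_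
  rcases mem_iUnion.1 (hcov (specLE_refl x)) with ⟨i, hxi⟩
  exact ⟨{i}, fun y hy => by
    simp only [Finset.mem_singleton, Set.iUnion_iUnion_eq_left]
    exact open_upper (hf i) hxi hy⟩

/-- the closure of a directed set is a Rudin set. -/
theorem stmt_3 {α : Type u} [TopologicalSpace α] [T0Space α]
    (D : Set α) (hD : SDirected D) :
    ∃ 𝒦 : Set (Set α), (∀ K ∈ 𝒦, IsKSet K) ∧ FilteredFam 𝒦 ∧
      (∀ K ∈ 𝒦, (closure D ∩ K).Nonempty) ∧
      ∀ B : Set α, IsClosed B → B ⊆ closure D → (∀ K ∈ 𝒦, (B ∩ K).Nonempty) →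
        B = closure D := by
  refine ⟨(fun d => upOf d) '' D, ?_, ?_, ?_, ?_⟩
  · rintro K ⟨d, _, rfl⟩; exact isKSet_upOf d
  · obtain ⟨d0, hd0⟩ := hD.1
    refine ⟨⟨upOf d0, ⟨d0, hd0, rfl⟩⟩, ?_⟩
    rintro K1 ⟨d1, hd1, rfl⟩ K2 ⟨d2, hd2, rfl⟩
    obtain ⟨c, hc, h1, h2⟩ := hD.2 d1 hd1 d2 hd2
    exact ⟨upOf c, ⟨c, hc, rfl⟩, fun y hy => ⟨specLE_trans h1 hy, specLE_trans h2 hy⟩⟩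
  · rintro K ⟨d, hd, rfl⟩
    exact ⟨d, subset_closure hd, specLE_refl d⟩
  · intro B hB hBsub hmeet
    refine subset_antisymm hBsub (closure_minimal (fun d hd => ?_) hB)
    obtain ⟨b, hbB, hdb⟩ := hmeet (upOf d) ⟨d, hd, rfl⟩
    exact hB.closure_subset_iff.2 (Set.singleton_subset_iff.2 hbB) hdb
end

section
/- Let X be a T0 space. Every closed well-filtered determined subset of X is irreducible; that is, if A is a nonempty closed set such that for every continuous map f from X to a well-filtered T0 space Y there is a (unique) y ∈ Y with closure(f(A)) = closure({y}), then A is an irreducible closed set. -/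
open Set

universe u

variable {α : Type u}

/-!
Irreducibility is tested against the four-point space `Prop × Prop`, a product of two Sierpiński
spaces, which is finite and T0 and hence well-filtered. If `closure (f '' A) = closure {y}`, an
open set meets `f '' A` exactly when it contains `y`. For opens `U₁, U₂` meeting `A`, the map
`x ↦ (x ∈ U₁, x ∈ U₂)` thus sends `y` into both basic opens of `Prop × Prop`, hence into their
intersection, and so `A` meets `U₁ ∩ U₂`.
-/

theorem FilteredFam.exists_subset_forall [Finite α] {𝒦 : Set (Set α)} (h𝒦 : FilteredFam 𝒦) :
    ∃ K₀ ∈ 𝒦, ∀ K ∈ 𝒦, K₀ ⊆ K := by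
  obtain ⟨K₀, hK₀, hmin⟩ := (Set.toFinite 𝒦).exists_minimal h𝒦.1
  refine ⟨K₀, hK₀, fun K hK => ?_⟩
  obtain ⟨K₃, hK₃, hsub⟩ := h𝒦.2 K₀ hK₀ K hK
  exact (hmin hK₃ (hsub.trans inter_subset_left)).trans (hsub.trans inter_subset_right)

theorem isWellFiltered_of_finite (X : Type u) [TopologicalSpace X] [Finite X] :
    IsWellFiltered X := by
  intro 𝒦 _ h𝒦 U _ hU
  obtain ⟨K₀, hK₀, hleast⟩ := h𝒦.exists_subset_forall
  exact ⟨K₀, hK₀, (subset_sInter hleast).trans hU⟩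

theorem isIrred_iff_isIrreducible [TopologicalSpace α] {A : Set α} :
    IsIrred A ↔ IsIrreducible A :=
  and_congr_right fun _ => isPreirreducible_iff_isClosed_union_isClosed.symm

theorem inter_preimage_nonempty_iff_of_closure_image_eq {β : Type*} [TopologicalSpace β]
    {f : α → β} {A : Set α} {y : β} (hy : closure (f '' A) = closure {y}) {V : Set β}
    (hV : IsOpen V) : (A ∩ f ⁻¹' V).Nonempty ↔ y ∈ V := by
  rw [← image_inter_nonempty_iff, ← closure_inter_open_nonempty_iff hV, hy,
    closure_inter_open_nonempty_iff hV, singleton_inter_nonempty]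

def membershipPair (U₁ U₂ : Set α) (x : α) : ULift.{u} (Prop × Prop) := ⟨(x ∈ U₁, x ∈ U₂)⟩

theorem continuous_membershipPair [TopologicalSpace α] {U₁ U₂ : Set α} (hU₁ : IsOpen U₁)
    (hU₂ : IsOpen U₂) : Continuous (membershipPair U₁ U₂) :=
  continuous_uliftUp.comp ((continuous_Prop.2 hU₁).prodMk (continuous_Prop.2 hU₂))

namespace IsWFD

variable [TopologicalSpace α] {A : Set α}

theorem nonempty (hA : IsWFD A) : A.Nonempty := by
  obtain ⟨y, hy, -⟩ :=
    hA PUnit (isWellFiltered_of_finite _) (fun _ => PUnit.unit) continuous_const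
  simpa using (inter_preimage_nonempty_iff_of_closure_image_eq hy isOpen_univ).2 (mem_univ y)

theorem isPreirreducible (hA : IsWFD A) : IsPreirreducible A := by
  intro U₁ U₂ hU₁ hU₂ h₁ h₂
  obtain ⟨y, hy, -⟩ :=
    hA _ (isWellFiltered_of_finite _) _ (continuous_membershipPair hU₁ hU₂)
  have hV₁ : IsOpen {z : ULift.{u} (Prop × Prop) | z.down.1} :=
    continuous_Prop.1 (continuous_fst.comp continuous_uliftDown)
  have hV₂ : IsOpen {z : ULift.{u} (Prop × Prop) | z.down.2} :=
    continuous_Prop.1 (continuous_snd.comp continuous_uliftDown)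
  have hy₁ := (inter_preimage_nonempty_iff_of_closure_image_eq hy hV₁).1 h₁
  have hy₂ := (inter_preimage_nonempty_iff_of_closure_image_eq hy hV₂).1 h₂
  exact (inter_preimage_nonempty_iff_of_closure_image_eq hy (hV₁.inter hV₂)).2 ⟨hy₁, hy₂⟩

end IsWFD

theorem stmt_4_general {α : Type u} [TopologicalSpace α]
    (A : Set α) (hwd : IsWFD A) :
    IsIrred A :=
  isIrred_iff_isIrreducible.2 ⟨hwd.nonempty, hwd.isPreirreducible⟩

/-- every closed well-filtered determined set is irreducible. -/
theorem stmt_4 {α : Type u} [TopologicalSpace α] [T0Space α]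
    (A : Set α) (hA : IsClosed A) (hne : A.Nonempty) (hwd : IsWFD A) :
    IsIrred A :=
  stmt_4_general A hwd
end

section
/- Let X and Y be T0 spaces and f : X → Y a continuous map. If A ⊆ X is a well-filtered determined set, then the closure of f(A) in Y is a well-filtered determined set. -/
open Set

universe u

variable {α : Type u}

/-- continuous images of well-filtered determined sets have
well-filtered determined closures. -/
theorem stmt_6 {α β : Type u} [TopologicalSpace α] [T0Space α]
    [TopologicalSpace β] [T0Space β]
    (f : α → β) (hf : Continuous f) (A : Set α) (hA : IsWFD A) :
    IsWFD (closure (f '' A)) := by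
  intro Z _ _ hZ g hg
  obtain ⟨z, hz, huniq⟩ := hA Z hZ (g ∘ f) (hg.comp hf)
  have key : closure (g '' closure (f '' A)) = closure ((g ∘ f) '' A) := by
    rw [closure_image_closure hg, image_comp]
  exact ⟨z, by rw [key, hz], fun y hy => huniq y (by rw [← key, hy])⟩
end

section
/- Every locally compact well-filtered T0 space is sober. -/
open Set

universe u

variable {α : Type u}

/-- Saturation of a set: intersection of its open neighborhoods. -/
def satur [TopologicalSpace α] (K : Set α) : Set α := ⋂₀ {U | IsOpen U ∧ K ⊆ U}

lemma subset_satur [TopologicalSpace α] (K : Set α) : K ⊆ satur K :=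
  fun x hx U hU => hU.2 hx

lemma satur_subset [TopologicalSpace α] {K U : Set α} (hU : IsOpen U) (hKU : K ⊆ U) :
    satur K ⊆ U := fun x hx => hx U ⟨hU, hKU⟩

lemma sUpper_satur [TopologicalSpace α] (K : Set α) : SUpper (satur K) := by
  intro x y hx hxy U hU
  have hxU : x ∈ U := hx U hU
  have hxy' : x ∈ closure ({y} : Set α) := hxy
  rw [mem_closure_iff] at hxy'
  rcases hxy' U hU.1 hxU with ⟨z, hzU, hz⟩
  rwa [Set.mem_singleton_iff.mp hz] at hzU

lemma isCompact_satur [TopologicalSpace α] {K : Set α} (hK : IsCompact K) :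
    IsCompact (satur K) := by
  apply isCompact_of_finite_subcover
  intro ι U hUopen hcov
  rcases hK.elim_finite_subcover U hUopen ((subset_satur K).trans hcov) with ⟨t, ht⟩
  exact ⟨t, satur_subset (isOpen_iUnion fun i => isOpen_iUnion fun _ => hUopen i) ht⟩

/-- every locally compact well-filtered T0 space is sober. -/
theorem stmt_12 (α : Type u) [TopologicalSpace α] [T0Space α] [LocallyCompactSpace α]
    (h : IsWellFiltered α) : IsSober α := by
  intro A hAcl hAirr
  obtain ⟨hAne, hirr⟩ := hAirr
  -- irreducibility: A meets two opens ⇒ A meets their intersection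
  have meet : ∀ V1 V2 : Set α, IsOpen V1 → IsOpen V2 →
      (A ∩ V1).Nonempty → (A ∩ V2).Nonempty → (A ∩ (V1 ∩ V2)).Nonempty := by
    intro V1 V2 h1 h2 hn1 hn2
    by_contra hcon
    rw [Set.not_nonempty_iff_eq_empty] at hcon
    have hsub : A ⊆ V1ᶜ ∪ V2ᶜ := by
      intro a ha
      by_contra hna
      simp only [Set.mem_union, Set.mem_compl_iff, not_or, not_not] at hna
      exact Set.eq_empty_iff_forall_notMem.mp hcon a ⟨ha, hna.1, hna.2⟩
    rcases hirr _ _ (isClosed_compl_iff.mpr h1) (isClosed_compl_iff.mpr h2) hsub with hs | hs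
    · rcases hn1 with ⟨a, haA, haV⟩; exact hs haA haV
    · rcases hn2 with ⟨a, haA, haV⟩; exact hs haA haV
  -- the family
  set 𝒦 : Set (Set α) := {K | IsKSet K ∧ (A ∩ interior K).Nonempty} with h𝒦
  have hKset : ∀ K ∈ 𝒦, IsKSet K := fun K hK => hK.1
  -- from a point of A in an open set, produce a member of 𝒦 inside that open set
  have build : ∀ (a : α) (U : Set α), IsOpen U → a ∈ U → a ∈ A →
      ∃ K ∈ 𝒦, K ⊆ U := by
    intro a U hUo haU haA
    rcases exists_compact_subset hUo haU with ⟨K, hKc, haint, hKU⟩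
    refine ⟨satur K, ⟨⟨⟨a, subset_satur K (interior_subset haint)⟩,
      isCompact_satur hKc, sUpper_satur K⟩, ⟨a, haA,
      interior_mono (subset_satur K) haint⟩⟩, satur_subset hUo hKU⟩
  -- 𝒦 is nonempty
  obtain ⟨a0, ha0⟩ := hAne
  obtain ⟨K0, hK0, _⟩ := build a0 Set.univ isOpen_univ (Set.mem_univ a0) ha0
  -- 𝒦 is filtered
  have hfil : FilteredFam 𝒦 := by
    refine ⟨⟨K0, hK0⟩, ?_⟩
    intro K1 hK1 K2 hK2
    obtain ⟨a, haA, haV⟩ := meet _ _ isOpen_interior isOpen_interior hK1.2 hK2.2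
    obtain ⟨K3, hK3, hK3sub⟩ := build a (interior K1 ∩ interior K2)
      (isOpen_interior.inter isOpen_interior) haV haA
    exact ⟨K3, hK3, hK3sub.trans (Set.inter_subset_inter interior_subset interior_subset)⟩
  -- every member of 𝒦 meets A
  have hmeetA : ∀ K ∈ 𝒦, (K ∩ A).Nonempty := by
    intro K hK
    obtain ⟨a, haA, haI⟩ := hK.2
    exact ⟨a, interior_subset haI, haA⟩
  -- well-filteredness: ⋂₀ 𝒦 meets A
  have hx : (⋂₀ 𝒦 ∩ A).Nonempty := by
    by_contra hcon
    rw [Set.not_nonempty_iff_eq_empty] at hcon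
    have hsub : ⋂₀ 𝒦 ⊆ Aᶜ := by
      intro x hxI
      by_contra hxA
      exact Set.eq_empty_iff_forall_notMem.mp hcon x ⟨hxI, not_not.mp hxA⟩
    obtain ⟨K, hKmem, hKsub⟩ := h 𝒦 hKset hfil Aᶜ hAcl.isOpen_compl hsub
    obtain ⟨y, hyK, hyA⟩ := hmeetA K hKmem
    exact hKsub hyK hyA
  obtain ⟨x, hxI, hxA⟩ := hx
  -- A = closure {x}
  have hmain : A = closure ({x} : Set α) := by
    apply Set.Subset.antisymm
    · intro a haA
      by_contra hna
      have hUo : IsOpen (closure ({x} : Set α))ᶜ := isClosed_closure.isOpen_compl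
      obtain ⟨K, hKmem, hKsub⟩ := build a _ hUo hna haA
      have hxK : x ∈ K := hxI K hKmem
      exact hKsub hxK (subset_closure rfl)
    · exact closure_minimal (Set.singleton_subset_iff.mpr hxA) hAcl
  refine ⟨x, hmain, ?_⟩
  intro y hy
  have : closure ({y} : Set α) = closure ({x} : Set α) := by rw [← hy, hmain]
  exact Inseparable.eq (inseparable_iff_closure_eq.mpr this)
end

section
/- If X is a d-space such that ↓(↑x ∩ A) is closed for every point x ∈ X and every closed set A, then X is a strong d-space. -/
open Set

universe u

variable {α : Type u}

/-- a d-space with `↓(↑x ∩ A)` closed for all points `x` and closed sets `A`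
is a strong d-space. -/
theorem stmt_16 (α : Type u) [TopologicalSpace α] [T0Space α] (hd : IsDSpace α)
    (h : ∀ (x : α) (A : Set α), IsClosed A → IsClosed (downOf (upOf x ∩ A))) :
    IsStrongDSpace α := by
  intro D hD x U hU hsub
  by_contra hcon
  push_neg at hcon
  have hAc : IsClosed (Uᶜ) := hU.isClosed_compl
  have hC : IsClosed (downOf (upOf x ∩ Uᶜ)) := h x Uᶜ hAc
  have hDC : D ⊆ downOf (upOf x ∩ Uᶜ) := by
    intro d hdD
    obtain ⟨y, hy, hyU⟩ := not_subset.mp (hcon d hdD)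
    exact ⟨y, ⟨hy.2, hyU⟩, hy.1⟩
  obtain ⟨s, hs⟩ := hd.1 D hD
  have hsC : s ∈ downOf (upOf x ∩ Uᶜ) := by
    by_contra hsC
    have hso := hd.2 _ hC.isOpen_compl
    obtain ⟨d, hdD, hdc⟩ := hso.2 D hD s hs hsC
    exact hdc (hDC hdD)
  obtain ⟨y, ⟨hyx, hyU⟩, hsy⟩ := hsC
  apply hyU
  apply hsub
  refine ⟨?_, hyx⟩
  simp only [mem_iInter]
  intro d hdD
  have hds : specLE d s := hs.1 d hdD
  exact closure_minimal (Set.singleton_subset_iff.mpr hsy) isClosed_closure hds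
end

section
/- For a poset P, the following are equivalent: (1) P equipped with the upper topology ν(P) is a strong d-space; (2) P is a dcpo, and for every family {F_i : i ∈ I} of nonempty finite subsets of P and every x ∈ P, the set ↓(↑x ∩ ⋂_{i∈I} ↓F_i) is Scott closed. -/
open Set

universe u

variable {α : Type u}

/-- The upper topology `ν(P)`: generated by the complements of principal ideals `↓x`
as a subbasis of open sets. -/
def upperTop (α : Type u) [Preorder α] : TopologicalSpace α :=
  TopologicalSpace.generateFrom {U : Set α | ∃ a : α, U = (Set.Iic a)ᶜ}

/-- A dcpo: every directed subset has a supremum. -/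
def IsDcpo (α : Type u) [Preorder α] : Prop :=
  ∀ D : Set α, D.Nonempty → DirectedOn (· ≤ ·) D → ∃ s : α, IsLUB D s

/-- Scott closed set: a lower set closed under suprema of directed subsets. -/
def ScottClosed [Preorder α] (A : Set α) : Prop :=
  IsLowerSet A ∧
    ∀ D : Set α, D ⊆ A → D.Nonempty → DirectedOn (· ≤ ·) D → ∀ s : α, IsLUB D s → s ∈ A

/-- `↓B`: the lower closure of a set `B`. -/
def lowOf [Preorder α] (B : Set α) : Set α := {x : α | ∃ b ∈ B, x ≤ b}

/-- `(P, ν(P))` is a strong d-space (stated via the order of `P`, which coincides with the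
specialization order of `ν(P)`). -/
def UpperTopStrongDSpace (α : Type u) [Preorder α] : Prop :=
  ∀ D : Set α, D.Nonempty → DirectedOn (· ≤ ·) D → ∀ x : α, ∀ U : Set α,
    (upperTop α).IsOpen U → (⋂ d ∈ D, Set.Ici d) ∩ Set.Ici x ⊆ U →
      ∃ d ∈ D, Set.Ici d ∩ Set.Ici x ⊆ U


section Aux
variable [Preorder α]

lemma lowOf_singleton (a : α) : lowOf {a} = Set.Iic a := by
  ext y; simp [lowOf, Set.mem_Iic]

lemma lowOf_empty : lowOf (∅ : Set α) = ∅ := by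
  ext y; simp [lowOf]

lemma lowOf_union (F G : Set α) : lowOf (F ∪ G) = lowOf F ∪ lowOf G := by
  ext y
  simp only [lowOf, Set.mem_union, Set.mem_setOf_eq]
  constructor
  · rintro ⟨b, (hb | hb), hyb⟩
    exacts [Or.inl ⟨b, hb, hyb⟩, Or.inr ⟨b, hb, hyb⟩]
  · rintro (⟨b, hb, hyb⟩ | ⟨b, hb, hyb⟩)
    exacts [⟨b, Or.inl hb, hyb⟩, ⟨b, Or.inr hb, hyb⟩]

lemma isOpen_compl_lowOf {F : Set α} (hF : F.Finite) :
    (upperTop α).IsOpen (lowOf F)ᶜ := by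
  letI := upperTop α
  have h : (lowOf F)ᶜ = ⋂ a ∈ F, (Set.Iic a)ᶜ := by
    ext y; simp [lowOf, Set.mem_Iic]
  rw [h]
  exact hF.isOpen_biInter fun a _ => TopologicalSpace.GenerateOpen.basic _ ⟨a, rfl⟩

lemma upperTop_isOpen_iff (U : Set α) :
    (upperTop α).IsOpen U ↔
      ∃ 𝒮 : Set (Set α), (∀ F ∈ 𝒮, F.Finite) ∧ U = (⋂ F ∈ 𝒮, lowOf F)ᶜ := by
  constructor
  · intro h
    induction h with
    | basic V hV =>
        obtain ⟨a, rfl⟩ := hV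
        exact ⟨{{a}}, by simp, by simp [lowOf_singleton]⟩
    | univ => exact ⟨{∅}, by simp, by simp [lowOf_empty]⟩
    | inter V W hV hW ihV ihW =>
        obtain ⟨𝒮, h𝒮, rfl⟩ := ihV
        obtain ⟨𝒯, h𝒯, rfl⟩ := ihW
        refine ⟨Set.image2 (· ∪ ·) 𝒮 𝒯, ?_, ?_⟩
        · rintro F ⟨F₁, h1, F₂, h2, rfl⟩
          exact (h𝒮 _ h1).union (h𝒯 _ h2)
        · ext y
          simp only [Set.mem_inter_iff, Set.mem_compl_iff, Set.mem_iInter, not_forall]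
          constructor
          · rintro ⟨⟨F, hF, hyF⟩, ⟨G, hG, hyG⟩⟩
            refine ⟨F ∪ G, Set.mem_image2_of_mem hF hG, ?_⟩
            rw [lowOf_union]
            rintro (h | h)
            exacts [hyF h, hyG h]
          · rintro ⟨H, ⟨F, hF, G, hG, rfl⟩, hyH⟩
            rw [lowOf_union] at hyH
            exact ⟨⟨F, hF, fun h => hyH (Or.inl h)⟩, ⟨G, hG, fun h => hyH (Or.inr h)⟩⟩
    | sUnion S hS ih =>
        choose f hf1 hf2 using ih
        refine ⟨⋃ (s : Set α) (h : s ∈ S), f s h, ?_, ?_⟩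
        · intro F hF
          simp only [Set.mem_iUnion] at hF
          obtain ⟨s, hs, hFs⟩ := hF
          exact hf1 s hs F hFs
        · ext y
          simp only [Set.mem_sUnion, Set.mem_compl_iff, Set.mem_iInter, not_forall]
          constructor
          · rintro ⟨s, hsS, hys⟩
            rw [hf2 s hsS] at hys
            simp only [Set.mem_compl_iff, Set.mem_iInter, not_forall] at hys
            obtain ⟨F, hF, hyF⟩ := hys
            exact ⟨F, by simp only [Set.mem_iUnion]; exact ⟨s, hsS, hF⟩, hyF⟩
          · rintro ⟨F, hF, hyF⟩
            simp only [Set.mem_iUnion] at hF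
            obtain ⟨s, hsS, hFs⟩ := hF
            refine ⟨s, hsS, ?_⟩
            rw [hf2 s hsS]
            simp only [Set.mem_compl_iff, Set.mem_iInter, not_forall]
            exact ⟨F, hFs, hyF⟩
  · rintro ⟨𝒮, h𝒮, rfl⟩
    letI := upperTop α
    have h : (⋂ F ∈ 𝒮, lowOf F)ᶜ = ⋃ F ∈ 𝒮, (lowOf F)ᶜ := by
      simp [Set.compl_iInter]
    rw [h]
    exact isOpen_biUnion fun F hF => isOpen_compl_lowOf (h𝒮 F hF)

end Aux

/-- `(P, ν(P))` is a strong d-space iff `P` is a dcpo and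
`↓(↑x ∩ ⋂ᵢ ↓Fᵢ)` is Scott closed for every family of nonempty finite sets `Fᵢ`
and every `x`. -/
theorem stmt_17 (α : Type u) [PartialOrder α] :
    UpperTopStrongDSpace α ↔
      (IsDcpo α ∧
        ∀ 𝒮 : Set (Set α), (∀ F ∈ 𝒮, F.Finite ∧ F.Nonempty) → ∀ x : α,
          ScottClosed (lowOf (Set.Ici x ∩ ⋂ F ∈ 𝒮, lowOf F))) := by
  constructor
  · intro h
    have hd : IsDcpo α := by
      intro D hne hdir
      by_contra hcon
      push_neg at hcon
      obtain ⟨x, hx⟩ := hne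
      have hUopen : (upperTop α).IsOpen (⋃ v ∈ upperBounds D, (Set.Iic v)ᶜ) := by
        letI := upperTop α
        exact isOpen_biUnion fun v _ => TopologicalSpace.GenerateOpen.basic _ ⟨v, rfl⟩
      have hsub : (⋂ d ∈ D, Set.Ici d) ∩ Set.Ici x ⊆ ⋃ v ∈ upperBounds D, (Set.Iic v)ᶜ := by
        rintro u ⟨hu1, _⟩
        have hub : u ∈ upperBounds D := by
          intro d hdD
          exact Set.mem_iInter₂.mp hu1 d hdD
        have hnl : ¬ IsLUB D u := hcon u
        have hv : ∃ v ∈ upperBounds D, ¬ u ≤ v := by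
          by_contra hc
          push_neg at hc
          exact hnl ⟨hub, fun v hv => hc v hv⟩
        obtain ⟨v, hv1, hv2⟩ := hv
        exact Set.mem_biUnion hv1 hv2
      obtain ⟨d, hdD, hd2⟩ := h D ⟨x, hx⟩ hdir x _ hUopen hsub
      obtain ⟨e, heD, hed, hex⟩ := hdir d hdD x hx
      have he : e ∈ ⋃ v ∈ upperBounds D, (Set.Iic v)ᶜ := hd2 ⟨hed, hex⟩
      simp only [Set.mem_iUnion, Set.mem_compl_iff, Set.mem_Iic, exists_prop] at he
      obtain ⟨v, hv, hev⟩ := he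
      exact hev (hv heD)
    refine ⟨hd, ?_⟩
    intro 𝒮 h𝒮 x
    constructor
    · rintro a b hba ⟨c, hc, hac⟩
      exact ⟨c, hc, hba.trans hac⟩
    · intro D hDsub hne hdir s hs
      by_contra hcon
      have hUopen : (upperTop α).IsOpen (⋃ F ∈ 𝒮, (lowOf F)ᶜ) := by
        letI := upperTop α
        exact isOpen_biUnion fun F hF => isOpen_compl_lowOf (h𝒮 F hF).1
      have hsub : (⋂ d ∈ D, Set.Ici d) ∩ Set.Ici x ⊆ ⋃ F ∈ 𝒮, (lowOf F)ᶜ := by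
        rintro u ⟨hu1, hu2⟩
        have hub : u ∈ upperBounds D := by
          intro d hdD
          exact Set.mem_iInter₂.mp hu1 d hdD
        have hsu : s ≤ u := hs.2 hub
        by_contra hnotU
        simp only [Set.mem_iUnion, Set.mem_compl_iff, exists_prop, not_exists, not_and,
          not_not] at hnotU
        exact hcon ⟨u, ⟨hu2, Set.mem_iInter₂.mpr hnotU⟩, hsu⟩
      obtain ⟨d, hdD, hd2⟩ := h D hne hdir x _ hUopen hsub
      obtain ⟨b, hb, hdb⟩ := hDsub hdD
      have hbU : b ∈ ⋃ F ∈ 𝒮, (lowOf F)ᶜ := hd2 ⟨hdb, hb.1⟩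
      simp only [Set.mem_iUnion, Set.mem_compl_iff, exists_prop] at hbU
      obtain ⟨F, hF, hbF⟩ := hbU
      exact hbF (Set.mem_iInter₂.mp hb.2 F hF)
  · rintro ⟨hd, hsc⟩
    intro D hne hdir x U hUopen hsub
    obtain ⟨s, hs⟩ := hd D hne hdir
    obtain ⟨𝒮, hfin, rfl⟩ := (upperTop_isOpen_iff U).mp hUopen
    by_cases hempty : ∃ F ∈ 𝒮, F = ∅
    · obtain ⟨F, hF, rfl⟩ := hempty
      obtain ⟨d, hdD⟩ := hne
      refine ⟨d, hdD, fun y _ => ?_⟩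
      intro hy
      have := Set.mem_iInter₂.mp hy _ hF
      simp [lowOf_empty] at this
    · push_neg at hempty
      by_contra hcon
      push_neg at hcon
      have hC := hsc 𝒮 (fun F hF => ⟨hfin F hF, hempty F hF⟩) x
      have hDC : D ⊆ lowOf (Set.Ici x ∩ ⋂ F ∈ 𝒮, lowOf F) := by
        intro d hdD
        obtain ⟨y, hy1, hy2⟩ := Set.not_subset.mp (hcon d hdD)
        simp only [Set.mem_compl_iff, not_not] at hy2
        exact ⟨y, ⟨hy1.2, hy2⟩, hy1.1⟩
      obtain ⟨b, hb, hsb⟩ := hC.2 D hDC hne hdir s hs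
      have hbU : b ∈ (⋂ F ∈ 𝒮, lowOf F)ᶜ := by
        apply hsub
        refine ⟨Set.mem_iInter₂.mpr fun d hdD => ?_, hb.1⟩
        exact le_trans (hs.1 hdD) hsb
      exact hbU hb.2
end
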